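/- arXiv:1707.00577 — 4 statements merged into one kernel-verified Lean document; each statement's English description precedes it below -/
import Mathlib

section
/- Let λ ≥ 0, ζ ≥ 0, and let σ ≥ 0 and step-sizes η_j > 0 satisfy η_j(λ + σ) ≤ 1 for all j. Then for any nonnegative integer k ≤ t − 1, σ^ζ ∏_{j=k+1}^t (1 − η_j(λ + σ)) ≤ exp(−λ Σ_{j=k+1}^t η_j) · (ζ / (e Σ_{j=k+1}^t η_j))^ζ. -/
lemma aux_xexp (x ζ : ℝ) (hx : 0 ≤ x) (hζ : 0 ≤ ζ) :
    x ^ ζ * Real.exp (-x) ≤ (ζ / Real.exp 1) ^ ζ := by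
  rcases eq_or_lt_of_le hζ with rfl | hζ'
  · rw [Real.rpow_zero, Real.rpow_zero, one_mul]
    exact Real.exp_le_one_iff.mpr (by linarith)
  rcases eq_or_lt_of_le hx with rfl | hx'
  · rw [Real.zero_rpow (ne_of_gt hζ'), zero_mul]
    positivity
  have hζe : 0 < ζ / Real.exp 1 := by positivity
  rw [← Real.exp_log (Real.rpow_pos_of_pos hx' ζ), ← Real.exp_log (Real.rpow_pos_of_pos hζe ζ),
    ← Real.exp_add, Real.exp_le_exp, Real.log_rpow hx', Real.log_rpow hζe,
    Real.log_div (ne_of_gt hζ') (ne_of_gt (Real.exp_pos 1)), Real.log_exp]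
  have h := Real.log_le_sub_one_of_pos (show 0 < x / ζ by positivity)
  rw [Real.log_div (ne_of_gt hx') (ne_of_gt hζ')] at h
  have : ζ * (Real.log x - Real.log ζ) ≤ ζ * (x / ζ - 1) := by
    exact mul_le_mul_of_nonneg_left h hζ
  have hz : ζ * (x / ζ - 1) = x - ζ := by field_simp
  nlinarith

/-- Scalar spectral bound on the initial error: for `λ ≥ 0`, `ζ ≥ 0`, `σ ≥ 0` and
step-sizes `η_j > 0` with `η_j(λ+σ) ≤ 1`, and `k ≤ t − 1` (with `t ≥ 1`):
`σ^ζ ∏_{j=k+1}^t (1 − η_j(λ+σ)) ≤ exp(−λ Σ_{j=k+1}^t η_j) (ζ/(e Σ_{j=k+1}^t η_j))^ζ`. -/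
theorem stmt_8 (l ζ σ : ℝ) (η : ℕ → ℝ) (hl : 0 ≤ l) (hζ : 0 ≤ ζ) (hσ : 0 ≤ σ)
    (hη : ∀ j, 0 < η j) (hηl : ∀ j, η j * (l + σ) ≤ 1)
    (k t : ℕ) (ht : 1 ≤ t) (hkt : k ≤ t - 1) :
    σ ^ ζ * ∏ j ∈ Finset.Icc (k + 1) t, (1 - η j * (l + σ)) ≤
      Real.exp (-(l * ∑ j ∈ Finset.Icc (k + 1) t, η j)) *
        (ζ / (Real.exp 1 * ∑ j ∈ Finset.Icc (k + 1) t, η j)) ^ ζ := by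
  set s := Finset.Icc (k + 1) t with hs
  set S := ∑ j ∈ s, η j with hS
  have hne : s.Nonempty := by
    refine ⟨t, Finset.mem_Icc.mpr ⟨by omega, le_rfl⟩⟩
  have hSpos : 0 < S := Finset.sum_pos (fun j _ => hη j) hne
  -- step 1: product ≤ exp(-(l+σ)*S)
  have hprod : ∏ j ∈ s, (1 - η j * (l + σ)) ≤ Real.exp (-((l + σ) * S)) := by
    have : ∏ j ∈ s, (1 - η j * (l + σ)) ≤ ∏ j ∈ s, Real.exp (-(η j * (l + σ))) := by
      apply Finset.prod_le_prod
      · intro j _; linarith [hηl j]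
      · intro j _
        have := Real.add_one_le_exp (-(η j * (l + σ)))
        linarith
    refine this.trans (le_of_eq ?_)
    rw [← Real.exp_sum]
    congr 1
    rw [hS, Finset.mul_sum, ← Finset.sum_neg_distrib]
    exact Finset.sum_congr rfl (fun j _ => by ring)
  have hprodnn : 0 ≤ ∏ j ∈ s, (1 - η j * (l + σ)) :=
    Finset.prod_nonneg (fun j _ => by linarith [hηl j])
  have hσζ : (0:ℝ) ≤ σ ^ ζ := Real.rpow_nonneg hσ ζ
  calc σ ^ ζ * ∏ j ∈ s, (1 - η j * (l + σ))
      ≤ σ ^ ζ * Real.exp (-((l + σ) * S)) := by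
        exact mul_le_mul_of_nonneg_left hprod hσζ
    _ = Real.exp (-(l * S)) * (σ ^ ζ * Real.exp (-(σ * S))) := by
        rw [show -((l + σ) * S) = -(l * S) + -(σ * S) by ring, Real.exp_add]; ring
    _ ≤ Real.exp (-(l * S)) * (ζ / (Real.exp 1 * S)) ^ ζ := by
        apply mul_le_mul_of_nonneg_left _ (le_of_lt (Real.exp_pos _))
        have key := aux_xexp (σ * S) ζ (by positivity) hζ
        have h1 : (σ * S) ^ ζ = σ ^ ζ * S ^ ζ :=
          Real.mul_rpow hσ hSpos.le
        have h2 : (ζ / (Real.exp 1 * S)) ^ ζ = (ζ / Real.exp 1) ^ ζ / S ^ ζ := by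
          rw [← Real.div_rpow (by positivity) hSpos.le]
          congr 1
          field_simp
        rw [h2, le_div_iff₀ (Real.rpow_pos_of_pos hSpos ζ)]
        calc σ ^ ζ * Real.exp (-(σ * S)) * S ^ ζ
            = (σ * S) ^ ζ * Real.exp (-(σ * S)) := by rw [h1]; ring
          _ ≤ (ζ / Real.exp 1) ^ ζ := key
end

section
/- Let c ≥ 0, γ ∈ [0,1], θ ∈ [0,1], and t ∈ ℕ with t ≥ 2. Then Σ_{k=1}^{t−1} k^{−2θ} exp(−c Σ_{j=k+1}^t j^{−θ}) (Σ_{j=k+1}^t j^{−θ})^{γ−1} ≤ 2^{2θ−γ} t^{γ − θ(γ+1)} ln(2t) · ( exp(−c t^{1−θ}/2) t^{(2θ−1)_+} + min(1, (t^{1−θ} c)^{−γ}) ). -/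
open Finset Real

lemma aux_harm (m t : ℕ) (h2m : 2 * m ≤ t) (ht : 2 ≤ t) :
    ∑ k ∈ Finset.Icc 1 m, (k : ℝ)⁻¹ ≤ Real.log (2 * t) := by
  have ht0 : (0:ℝ) < t := by positivity
  have hlog0 : 0 ≤ Real.log (2 * t) := by
    apply Real.log_nonneg
    have : (2:ℝ) ≤ t := by exact_mod_cast ht
    nlinarith
  rcases Nat.eq_zero_or_pos m with hm | hm
  · subst hm; simpa using hlog0
  · have h1 : ∑ k ∈ Finset.Icc 1 m, (k : ℝ)⁻¹ = (harmonic m : ℝ) := by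
      rw [harmonic_eq_sum_Icc]; push_cast; rfl
    rw [h1]
    refine (harmonic_le_one_add_log m).trans ?_
    have hm0 : (0:ℝ) < m := by positivity
    have : 1 + Real.log m = Real.log (Real.exp 1 * m) := by
      rw [Real.log_mul (by positivity) (by positivity), Real.log_exp]
    rw [this]
    apply Real.log_le_log (by positivity)
    have he : Real.exp 1 ≤ 4 := by
      have := Real.exp_one_lt_d9; linarith
    have hmt : (m:ℝ) * 2 ≤ t := by
      have h : ((2*m : ℕ):ℝ) ≤ ((t:ℕ):ℝ) := Nat.cast_le.mpr h2m
      push_cast at h; linarith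
    nlinarith

lemma aux_key (γ x : ℝ) (hγ0 : 0 ≤ γ) (hγ1 : γ ≤ 1) (hx : 0 < x) :
    x ^ γ * Real.exp (-x) ≤ 2 ^ (-γ) := by
  have hep : (0:ℝ) < Real.exp x := Real.exp_pos x
  have h2p : (0:ℝ) < 2 ^ γ := by positivity
  have h2x : (2*x) ^ γ ≤ Real.exp x := by
    rcases le_total (2*x) 1 with h | h
    · calc (2*x) ^ γ ≤ 1 := Real.rpow_le_one (by positivity) h hγ0
        _ ≤ Real.exp x := by nlinarith [Real.add_one_le_exp x]
    · calc (2*x) ^ γ ≤ (2*x) ^ (1:ℝ) := Real.rpow_le_rpow_of_exponent_le h hγ1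
        _ = 2*x := Real.rpow_one _
        _ ≤ Real.exp x := by
            have h1 := Real.add_one_le_exp (x/2)
            have h2 : Real.exp (x/2) * Real.exp (x/2) = Real.exp x := by
              rw [← Real.exp_add]; ring_nf
            have h3 := mul_self_le_mul_self (by linarith : (0:ℝ) ≤ x/2+1) h1
            nlinarith [sq_nonneg (x/2 - 1)]
  have hmul : (2*x) ^ γ = 2 ^ γ * x ^ γ := Real.mul_rpow (by norm_num) hx.le
  rw [hmul] at h2x
  rw [Real.exp_neg, Real.rpow_neg (by norm_num : (0:ℝ) ≤ 2), ← div_eq_mul_inv,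
    div_le_iff₀ hep, inv_mul_eq_div, le_div_iff₀ h2p]
  nlinarith [Real.rpow_nonneg hx.le γ]

lemma aux_i1 (γ N i : ℝ) (hγ0 : 0 ≤ γ) (z : ℝ) (hz : z ≤ 0) (hi : 1 ≤ i) (hiN : 2*i ≤ N) :
    i ^ (γ-1) * Real.exp z ≤ i⁻¹ * (N/2) ^ γ := by
  have hi0 : (0:ℝ) < i := by linarith
  have h1 : i ^ (γ-1) = i⁻¹ * i ^ γ := by
    rw [Real.rpow_sub hi0, Real.rpow_one, div_eq_mul_inv]; ring
  have h2 : i ^ γ ≤ (N/2) ^ γ := Real.rpow_le_rpow hi0.le (by linarith) hγ0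
  have h3 : Real.exp z ≤ 1 := Real.exp_le_one_iff.mpr hz
  calc i ^ (γ-1) * Real.exp z ≤ i ^ (γ-1) * 1 := by
        apply mul_le_mul_of_nonneg_left h3 (Real.rpow_nonneg hi0.le _)
    _ = i⁻¹ * i ^ γ := by rw [mul_one, h1]
    _ ≤ i⁻¹ * (N/2) ^ γ := by
        apply mul_le_mul_of_nonneg_left h2 (by positivity)

lemma aux_i2 (γ a N i : ℝ) (hγ0 : 0 ≤ γ) (hγ1 : γ ≤ 1) (ha : 0 < a)
    (hi : 1 ≤ i) (hiN : 2*i ≤ N) :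
    i ^ (γ-1) * Real.exp (-(a*i)) ≤ i⁻¹ * (N/2) ^ γ * (N*a) ^ (-γ) := by
  have hi0 : (0:ℝ) < i := by linarith
  have hN0 : (0:ℝ) < N := by linarith
  have h1 : i ^ (γ-1) = i⁻¹ * i ^ γ := by
    rw [Real.rpow_sub hi0, Real.rpow_one, div_eq_mul_inv]; ring
  have hkey := aux_key γ (a*i) hγ0 hγ1 (by positivity)
  have h2 : (a*i) ^ γ = a ^ γ * i ^ γ := Real.mul_rpow ha.le hi0.le
  have haγ : (0:ℝ) < a ^ γ := by positivity
  have h3 : i ^ γ * Real.exp (-(a*i)) ≤ (a ^ γ)⁻¹ * 2 ^ (-γ) := by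
    rw [h2] at hkey
    rw [Real.rpow_neg (by norm_num : (0:ℝ) ≤ 2)] at *
    rw [inv_mul_eq_div, le_div_iff₀ haγ] at *
    nlinarith [Real.exp_pos (-(a*i)), Real.rpow_nonneg hi0.le γ]
  have h4 : (N/2) ^ γ * (N*a) ^ (-γ) = (a ^ γ)⁻¹ * (2 ^ γ)⁻¹ := by
    rw [Real.rpow_neg (by positivity), Real.mul_rpow hN0.le ha.le,
      Real.div_rpow hN0.le (by norm_num)]
    have hNγ : (0:ℝ) < N ^ γ := by positivity
    have h2γ : (0:ℝ) < (2:ℝ) ^ γ := by positivity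
    field_simp
  calc i ^ (γ-1) * Real.exp (-(a*i)) = i⁻¹ * (i ^ γ * Real.exp (-(a*i))) := by
        rw [h1]; ring
    _ ≤ i⁻¹ * ((a ^ γ)⁻¹ * 2 ^ (-γ)) := by
        apply mul_le_mul_of_nonneg_left h3 (by positivity)
    _ = i⁻¹ * (N/2) ^ γ * (N*a) ^ (-γ) := by
        rw [mul_assoc, h4, Real.rpow_neg (by norm_num : (0:ℝ) ≤ 2)]

lemma aux_Slb (θ : ℝ) (hθ0 : 0 ≤ θ) (t k : ℕ) (hk : k < t) :
    ((t-k:ℕ):ℝ) * (t:ℝ) ^ (-θ) ≤ ∑ j ∈ Finset.Icc (k+1) t, (j:ℝ) ^ (-θ) := by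
  have hcard : (Finset.Icc (k+1) t).card = t - k := by
    rw [Nat.card_Icc]; omega
  have h : ∀ j ∈ Finset.Icc (k+1) t, (t:ℝ) ^ (-θ) ≤ (j:ℝ) ^ (-θ) := by
    intro j hj
    rw [Finset.mem_Icc] at hj
    apply Real.rpow_le_rpow_of_nonpos
    · have h1 : 1 ≤ j := by omega
      exact_mod_cast h1
    · exact_mod_cast hj.2
    · linarith
  calc ((t-k:ℕ):ℝ) * (t:ℝ) ^ (-θ) = (Finset.Icc (k+1) t).card • ((t:ℝ) ^ (-θ)) := by
        rw [hcard, nsmul_eq_mul]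
    _ ≤ ∑ j ∈ Finset.Icc (k+1) t, (j:ℝ) ^ (-θ) := Finset.card_nsmul_le_sum _ _ _ h


set_option maxHeartbeats 2000000 in
/-- Key combinatorial estimate (Lemma 5.3): for `c ≥ 0`, `γ ∈ [0,1]`, `θ ∈ [0,1]`, `t ≥ 2`,
`Σ_{k=1}^{t−1} k^{−2θ} exp(−c Σ_{j=k+1}^t j^{−θ}) (Σ_{j=k+1}^t j^{−θ})^{γ−1}
  ≤ 2^{2θ−γ} t^{γ−θ(γ+1)} ln(2t) (exp(−c t^{1−θ}/2) t^{(2θ−1)₊} + min(1,(t^{1−θ}c)^{−γ}))`,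
where `min(1,(t^{1−θ}c)^{−γ})` is interpreted as `1` when `c = 0` (convention `1/0 = ∞`). -/
theorem stmt_9 (c γ θ : ℝ) (hc : 0 ≤ c) (hγ0 : 0 ≤ γ) (hγ1 : γ ≤ 1)
    (hθ0 : 0 ≤ θ) (hθ1 : θ ≤ 1) (t : ℕ) (ht : 2 ≤ t) :
    ∑ k ∈ Finset.Icc 1 (t - 1), (k : ℝ) ^ (-(2 * θ)) *
        Real.exp (-c * ∑ j ∈ Finset.Icc (k + 1) t, (j : ℝ) ^ (-θ)) *
        (∑ j ∈ Finset.Icc (k + 1) t, (j : ℝ) ^ (-θ)) ^ (γ - 1) ≤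
      (2 : ℝ) ^ (2 * θ - γ) * (t : ℝ) ^ (γ - θ * (γ + 1)) * Real.log (2 * t) *
        (Real.exp (-c * (t : ℝ) ^ (1 - θ) / 2) * (t : ℝ) ^ (max (2 * θ - 1) 0) +
          (if c = 0 then 1 else min 1 (((t : ℝ) ^ (1 - θ) * c) ^ (-γ)))) := by
  set N : ℝ := (t : ℝ) with hNdef
  have hN2 : (2:ℝ) ≤ N := by rw [hNdef]; exact_mod_cast ht
  have hN0 : (0:ℝ) < N := by linarith
  set S : ℕ → ℝ := fun k => ∑ j ∈ Finset.Icc (k + 1) t, (j : ℝ) ^ (-θ) with hSdef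
  set L : ℝ := Real.log (2 * N) with hLdef
  have hL0 : 0 ≤ L := Real.log_nonneg (by linarith)
  set q : ℝ := max (2 * θ - 1) 0 with hqdef
  set p : ℝ := max (1 - 2 * θ) 0 with hpdef
  have hq0 : 0 ≤ q := le_max_right _ _
  have hp0 : 0 ≤ p := le_max_right _ _
  have hpq : p = 1 - 2 * θ + q := by
    rcases le_total (2 * θ) 1 with h | h
    · rw [hpdef, hqdef, max_eq_left (by linarith), max_eq_right (by linarith)]; ring
    · rw [hpdef, hqdef, max_eq_right (by linarith), max_eq_left (by linarith)]; ring
  set E : ℝ := Real.exp (-c * N ^ (1 - θ) / 2) with hEdef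
  set M : ℝ := if c = 0 then 1 else min 1 ((N ^ (1 - θ) * c) ^ (-γ)) with hMdef
  have hE0 : 0 < E := Real.exp_pos _
  have hM0 : 0 ≤ M := by
    rw [hMdef]
    split
    · norm_num
    · exact le_min (by norm_num) (by positivity)
  -- helper: (N/2)^x = N^x * 2^(-x)
  have hhalf : ∀ x : ℝ, (N/2) ^ x = N ^ x * (2:ℝ) ^ (-x) := fun x => by
    rw [div_eq_mul_inv, Real.mul_rpow hN0.le (by positivity),
      Real.inv_rpow (by norm_num : (0:ℝ) ≤ 2), ← Real.rpow_neg (by norm_num : (0:ℝ) ≤ 2)]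
  have hN1θ : N ^ (1 - θ) = N * N ^ (-θ) := by
    rw [show (1 - θ) = 1 + (-θ) by ring, Real.rpow_add hN0, Real.rpow_one]
  set C1 : ℝ := (N/2) ^ p * (E * (N ^ (1-θ) / 2) ^ (γ-1)) with hC1def
  set C2 : ℝ := (N/2) ^ (-(2*θ)) * N ^ (θ*(1-γ)) * ((N/2) ^ γ * M) with hC2def
  have hC10 : 0 ≤ C1 := by positivity
  have hC20 : 0 ≤ C2 := by positivity
  -- Part A
  have hA : ∑ k ∈ (Finset.Icc 1 (t-1)).filter (fun k => 2*k ≤ t),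
      (k : ℝ) ^ (-(2 * θ)) * Real.exp (-c * ∑ j ∈ Finset.Icc (k + 1) t, (j : ℝ) ^ (-θ)) *
      (∑ j ∈ Finset.Icc (k + 1) t, (j : ℝ) ^ (-θ)) ^ (γ - 1) ≤ L * C1 := by
    calc ∑ k ∈ (Finset.Icc 1 (t-1)).filter (fun k => 2*k ≤ t),
        (k : ℝ) ^ (-(2 * θ)) * Real.exp (-c * ∑ j ∈ Finset.Icc (k + 1) t, (j : ℝ) ^ (-θ)) *
        (∑ j ∈ Finset.Icc (k + 1) t, (j : ℝ) ^ (-θ)) ^ (γ - 1)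
        ≤ ∑ k ∈ (Finset.Icc 1 (t-1)).filter (fun k => 2*k ≤ t), (k:ℝ)⁻¹ * C1 := by
          apply Finset.sum_le_sum
          intro k hk
          rw [Finset.mem_filter, Finset.mem_Icc] at hk
          obtain ⟨⟨hk1, hk2⟩, hk3⟩ := hk
          set Sk : ℝ := ∑ j ∈ Finset.Icc (k + 1) t, (j : ℝ) ^ (-θ) with hSk
          have hk0 : (0:ℝ) < k := by exact_mod_cast hk1
          have hkhalf : (k:ℝ) ≤ N/2 := by
            have h : ((2*k:ℕ):ℝ) ≤ ((t:ℕ):ℝ) := Nat.cast_le.mpr hk3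
            push_cast at h; rw [hNdef]; linarith
          have hS1 : N ^ (1-θ)/2 ≤ Sk := by
            have h0 := aux_Slb θ hθ0 t k (by omega)
            have hcast : ((t-k:ℕ):ℝ) = N - k := by
              rw [Nat.cast_sub (by omega)]
            rw [hcast] at h0
            have h2 : (N/2) * N ^ (-θ) ≤ (N - k) * N ^ (-θ) :=
              mul_le_mul_of_nonneg_right (by linarith) (Real.rpow_nonneg hN0.le _)
            calc N ^ (1-θ)/2 = (N/2) * N ^ (-θ) := by rw [hN1θ]; ring
              _ ≤ (N - k) * N ^ (-θ) := h2
              _ ≤ Sk := h0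
          have hSpos : 0 < Sk := lt_of_lt_of_le (by positivity) hS1
          have b1 : (k:ℝ) ^ (-(2*θ)) ≤ (k:ℝ)⁻¹ * (N/2) ^ p := by
            have e : (k:ℝ) ^ (-(2*θ)) = (k:ℝ)⁻¹ * (k:ℝ) ^ (1-2*θ) := by
              rw [← Real.rpow_neg_one (k:ℝ), ← Real.rpow_add hk0]
              congr 1 <;> ring
            rw [e]
            apply mul_le_mul_of_nonneg_left _ (by positivity)
            rcases le_total (1-2*θ) 0 with h | h
            · have h1 : (k:ℝ) ^ (1-2*θ) ≤ 1 :=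
                Real.rpow_le_one_of_one_le_of_nonpos (by exact_mod_cast hk1) h
              have h2 : (1:ℝ) ≤ (N/2) ^ p := by
                calc (1:ℝ) = (N/2) ^ (0:ℝ) := (Real.rpow_zero _).symm
                  _ ≤ (N/2) ^ p := Real.rpow_le_rpow_of_exponent_le (by linarith) hp0
              linarith
            · have hp : p = 1-2*θ := max_eq_left h
              rw [hp]
              exact Real.rpow_le_rpow hk0.le hkhalf h
          have b2 : Real.exp (-c * Sk) ≤ E := by
            rw [hEdef]
            apply Real.exp_le_exp.mpr
            have := mul_le_mul_of_nonneg_left hS1 hc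
            linarith
          have b3 : Sk ^ (γ-1) ≤ (N ^ (1-θ)/2) ^ (γ-1) :=
            Real.rpow_le_rpow_of_nonpos (by positivity) hS1 (by linarith)
          calc (k:ℝ) ^ (-(2*θ)) * Real.exp (-c * Sk) * Sk ^ (γ-1)
              ≤ ((k:ℝ)⁻¹ * (N/2) ^ p) * E * (N ^ (1-θ)/2) ^ (γ-1) := by
                apply mul_le_mul _ b3 (Real.rpow_nonneg hSpos.le _) (by positivity)
                exact mul_le_mul b1 b2 (Real.exp_nonneg _) (by positivity)
            _ = (k:ℝ)⁻¹ * C1 := by rw [hC1def]; ring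
      _ = (∑ k ∈ (Finset.Icc 1 (t-1)).filter (fun k => 2*k ≤ t), (k:ℝ)⁻¹) * C1 := by
          rw [← Finset.sum_mul]
      _ ≤ L * C1 := by
          apply mul_le_mul_of_nonneg_right _ hC10
          calc ∑ k ∈ (Finset.Icc 1 (t-1)).filter (fun k => 2*k ≤ t), (k:ℝ)⁻¹
              ≤ ∑ k ∈ Finset.Icc 1 (t/2), (k:ℝ)⁻¹ := by
                apply Finset.sum_le_sum_of_subset_of_nonneg
                · intro k hk
                  rw [Finset.mem_filter, Finset.mem_Icc] at hk
                  rw [Finset.mem_Icc]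
                  omega
                · intros; positivity
            _ ≤ L := by
                rw [hLdef, hNdef]
                exact aux_harm (t/2) t (by omega) ht
  -- Part B
  have hB : ∑ k ∈ (Finset.Icc 1 (t-1)).filter (fun k => ¬ 2*k ≤ t),
      (k : ℝ) ^ (-(2 * θ)) * Real.exp (-c * ∑ j ∈ Finset.Icc (k + 1) t, (j : ℝ) ^ (-θ)) *
      (∑ j ∈ Finset.Icc (k + 1) t, (j : ℝ) ^ (-θ)) ^ (γ - 1) ≤ L * C2 := by
    calc ∑ k ∈ (Finset.Icc 1 (t-1)).filter (fun k => ¬ 2*k ≤ t),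
        (k : ℝ) ^ (-(2 * θ)) * Real.exp (-c * ∑ j ∈ Finset.Icc (k + 1) t, (j : ℝ) ^ (-θ)) *
        (∑ j ∈ Finset.Icc (k + 1) t, (j : ℝ) ^ (-θ)) ^ (γ - 1)
        ≤ ∑ k ∈ (Finset.Icc 1 (t-1)).filter (fun k => ¬ 2*k ≤ t), ((t-k:ℕ):ℝ)⁻¹ * C2 := by
          apply Finset.sum_le_sum
          intro k hk
          rw [Finset.mem_filter, Finset.mem_Icc] at hk
          obtain ⟨⟨hk1, hk2⟩, hk3⟩ := hk
          push_neg at hk3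
          set Sk : ℝ := ∑ j ∈ Finset.Icc (k + 1) t, (j : ℝ) ^ (-θ) with hSk
          set iR : ℝ := ((t-k:ℕ):ℝ) with hiRdef
          set a : ℝ := c * N ^ (-θ) with hadef
          have ha0 : 0 ≤ a := by positivity
          have hi1 : (1:ℝ) ≤ iR := by
            rw [hiRdef]; exact_mod_cast (by omega : 1 ≤ t - k)
          have h2i : 2 * iR ≤ N := by
            rw [hiRdef, hNdef]
            have h : ((2*(t-k):ℕ):ℝ) ≤ ((t:ℕ):ℝ) := Nat.cast_le.mpr (by omega)
            push_cast at h; linarith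
          have hkN : N/2 ≤ (k:ℝ) := by
            have h : ((t:ℕ):ℝ) < ((2*k:ℕ):ℝ) := Nat.cast_lt.mpr hk3
            push_cast at h; rw [hNdef]; linarith
          have hi0 : (0:ℝ) < iR := by linarith
          have hSlb : iR * N ^ (-θ) ≤ Sk := by
            rw [hiRdef]; exact aux_Slb θ hθ0 t k (by omega)
          have hSpos : 0 < Sk := lt_of_lt_of_le (by positivity) hSlb
          have b1 : (k:ℝ) ^ (-(2*θ)) ≤ (N/2) ^ (-(2*θ)) :=
            Real.rpow_le_rpow_of_nonpos (by positivity) hkN (by linarith)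
          have b2 : Real.exp (-c * Sk) ≤ Real.exp (-(a * iR)) := by
            apply Real.exp_le_exp.mpr
            have h := mul_le_mul_of_nonneg_left hSlb hc
            have e : a * iR = c * (iR * N ^ (-θ)) := by rw [hadef]; ring
            rw [e]; linarith
          have b3 : Sk ^ (γ-1) ≤ iR ^ (γ-1) * N ^ (θ*(1-γ)) := by
            have h := Real.rpow_le_rpow_of_nonpos (by positivity) hSlb (by linarith : γ-1 ≤ 0)
            have e : (iR * N ^ (-θ)) ^ (γ-1) = iR ^ (γ-1) * N ^ (θ*(1-γ)) := by
              rw [Real.mul_rpow hi0.le (Real.rpow_nonneg hN0.le _),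
                ← Real.rpow_mul hN0.le]
              congr 2 <;> ring
            rw [← e]; exact h
          have key : iR ^ (γ-1) * Real.exp (-(a * iR)) ≤ iR⁻¹ * ((N/2) ^ γ * M) := by
            by_cases hcz : c = 0
            · have hM1 : M = 1 := by rw [hMdef, if_pos hcz]
              rw [hM1, mul_one]
              exact aux_i1 γ N iR hγ0 _ (neg_nonpos.mpr (by positivity)) hi1 h2i
            · have hc0 : 0 < c := lt_of_le_of_ne hc (Ne.symm hcz)
              have ha : 0 < a := by rw [hadef]; positivity
              have hNa : N ^ (1-θ) * c = N * a := by rw [hadef, hN1θ]; ring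
              have hM1 : M = min 1 ((N*a) ^ (-γ)) := by
                rw [hMdef, if_neg hcz, hNa]
              rw [hM1]
              have hmin : iR⁻¹ * ((N/2) ^ γ * min 1 ((N*a) ^ (-γ)))
                  = min (iR⁻¹ * (N/2) ^ γ) (iR⁻¹ * (N/2) ^ γ * (N*a) ^ (-γ)) := by
                have hu : (0:ℝ) ≤ iR⁻¹ * (N/2) ^ γ := by positivity
                rcases le_total (1:ℝ) ((N*a) ^ (-γ)) with h | h
                · rw [min_eq_left h, min_eq_left (by nlinarith), mul_one]
                · rw [min_eq_right h, min_eq_right (by nlinarith), mul_assoc]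
              rw [hmin]
              refine le_min ?_ ?_
              · exact aux_i1 γ N iR hγ0 _ (neg_nonpos.mpr (by positivity)) hi1 h2i
              · exact aux_i2 γ a N iR hγ0 hγ1 ha hi1 h2i
          calc (k:ℝ) ^ (-(2*θ)) * Real.exp (-c * Sk) * Sk ^ (γ-1)
              ≤ (N/2) ^ (-(2*θ)) * Real.exp (-(a * iR)) * (iR ^ (γ-1) * N ^ (θ*(1-γ))) := by
                apply mul_le_mul _ b3 (Real.rpow_nonneg hSpos.le _) (by positivity)
                exact mul_le_mul b1 b2 (Real.exp_nonneg _) (by positivity)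
            _ = ((N/2) ^ (-(2*θ)) * N ^ (θ*(1-γ))) * (iR ^ (γ-1) * Real.exp (-(a * iR))) := by
                ring
            _ ≤ ((N/2) ^ (-(2*θ)) * N ^ (θ*(1-γ))) * (iR⁻¹ * ((N/2) ^ γ * M)) := by
                apply mul_le_mul_of_nonneg_left key (by positivity)
            _ = iR⁻¹ * C2 := by rw [hC2def]; ring
      _ = (∑ k ∈ (Finset.Icc 1 (t-1)).filter (fun k => ¬ 2*k ≤ t), ((t-k:ℕ):ℝ)⁻¹) * C2 := by
          rw [← Finset.sum_mul]
      _ ≤ L * C2 := by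
          apply mul_le_mul_of_nonneg_right _ hC20
          have hinj : ∀ x ∈ (Finset.Icc 1 (t-1)).filter (fun k => ¬ 2*k ≤ t),
              ∀ y ∈ (Finset.Icc 1 (t-1)).filter (fun k => ¬ 2*k ≤ t),
              t - x = t - y → x = y := by
            intro x hx y hy h
            rw [Finset.mem_filter, Finset.mem_Icc] at hx hy
            omega
          calc ∑ k ∈ (Finset.Icc 1 (t-1)).filter (fun k => ¬ 2*k ≤ t), ((t-k:ℕ):ℝ)⁻¹
              = ∑ i ∈ ((Finset.Icc 1 (t-1)).filter (fun k => ¬ 2*k ≤ t)).image (fun k => t - k),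
                (i:ℝ)⁻¹ := (Finset.sum_image (f := fun i : ℕ => (i:ℝ)⁻¹) (g := fun k => t - k) hinj).symm
            _ ≤ ∑ i ∈ Finset.Icc 1 ((t-1)/2), (i:ℝ)⁻¹ := by
                apply Finset.sum_le_sum_of_subset_of_nonneg
                · intro i hi
                  rw [Finset.mem_image] at hi
                  obtain ⟨k, hk, rfl⟩ := hi
                  rw [Finset.mem_filter, Finset.mem_Icc] at hk
                  rw [Finset.mem_Icc]
                  omega
                · intros; positivity
            _ ≤ L := by
                rw [hLdef, hNdef]
                exact aux_harm ((t-1)/2) t (by omega) ht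
  -- bound C1
  have hC1T : C1 ≤ 2 ^ (2*θ-γ) * N ^ (γ-θ*(γ+1)) * (E * N ^ q) := by
    have e2 : (N ^ (1-θ)/2) ^ (γ-1) = N ^ ((1-θ)*(γ-1)) * (2:ℝ) ^ (1-γ) := by
      rw [div_eq_mul_inv, Real.mul_rpow (Real.rpow_nonneg hN0.le _) (by positivity),
        ← Real.rpow_mul hN0.le, Real.inv_rpow (by norm_num : (0:ℝ) ≤ 2),
        ← Real.rpow_neg (by norm_num : (0:ℝ) ≤ 2)]
      congr 2 <;> ring
    have eN : N ^ p * N ^ ((1-θ)*(γ-1)) = N ^ (γ-θ*(γ+1)) * N ^ q := by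
      rw [← Real.rpow_add hN0, ← Real.rpow_add hN0]
      congr 1; rw [hpq]; ring
    have hC1eq : C1 = (2 ^ (-p) * 2 ^ (1-γ)) * (N ^ (γ-θ*(γ+1)) * N ^ q) * E := by
      rw [hC1def, hhalf p, e2, ← eN]; ring
    have h2le : (2:ℝ) ^ (-p) * 2 ^ (1-γ) ≤ 2 ^ (2*θ-γ) := by
      rw [← Real.rpow_add (by norm_num : (0:ℝ) < 2)]
      apply Real.rpow_le_rpow_of_exponent_le one_le_two
      have := le_max_left (1-2*θ) (0:ℝ)
      rw [← hpdef] at this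
      linarith
    calc C1 = (2 ^ (-p) * 2 ^ (1-γ)) * (N ^ (γ-θ*(γ+1)) * N ^ q) * E := hC1eq
      _ ≤ 2 ^ (2*θ-γ) * (N ^ (γ-θ*(γ+1)) * N ^ q) * E := by
          apply mul_le_mul_of_nonneg_right (mul_le_mul_of_nonneg_right h2le (by positivity)) hE0.le
      _ = 2 ^ (2*θ-γ) * N ^ (γ-θ*(γ+1)) * (E * N ^ q) := by ring
  -- C2 equality
  have hC2eq : C2 = 2 ^ (2*θ-γ) * N ^ (γ-θ*(γ+1)) * M := by
    rw [hC2def, hhalf (-(2*θ)), hhalf γ, neg_neg]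
    have e2 : (2:ℝ) ^ (2*θ) * 2 ^ (-γ) = 2 ^ (2*θ-γ) := by
      rw [← Real.rpow_add (by norm_num : (0:ℝ) < 2)]; congr 1 <;> ring
    have eN : N ^ (-(2*θ)) * N ^ (θ*(1-γ)) * N ^ γ = N ^ (γ-θ*(γ+1)) := by
      rw [← Real.rpow_add hN0, ← Real.rpow_add hN0]; congr 1 <;> ring
    calc N ^ (-(2*θ)) * 2 ^ (2*θ) * N ^ (θ*(1-γ)) * (N ^ γ * 2 ^ (-γ) * M)
        = (2 ^ (2*θ) * 2 ^ (-γ)) * (N ^ (-(2*θ)) * N ^ (θ*(1-γ)) * N ^ γ) * M := by ring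
      _ = 2 ^ (2*θ-γ) * N ^ (γ-θ*(γ+1)) * M := by rw [e2, eN]
  -- combine
  rw [← Finset.sum_filter_add_sum_filter_not (Finset.Icc 1 (t-1)) (fun k => 2*k ≤ t)]
  calc _ ≤ L * C1 + L * C2 := add_le_add hA hB
    _ ≤ L * (2 ^ (2*θ-γ) * N ^ (γ-θ*(γ+1)) * (E * N ^ q)) + L * (2 ^ (2*θ-γ) * N ^ (γ-θ*(γ+1)) * M) := by
        apply add_le_add
        · exact mul_le_mul_of_nonneg_left hC1T hL0
        · rw [hC2eq]
    _ = 2 ^ (2*θ-γ) * N ^ (γ-θ*(γ+1)) * L * (E * N ^ q + M) := by ring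
end

section
/- Let σ_i be the eigenvalues of a positive compact self-adjoint operator L with σ_i ≤ κ², satisfying tr(L(L+λ)^{−1}) ≤ c_γ λ^{−γ} for all λ > 0. Let λ ≥ 0 and step-sizes η_j > 0 with η_j(λ + κ²) ≤ 1. Then for any k ≤ t−1, tr(Π_{k+1}^t(L+λI)² L) ≤ 2 c_γ exp(−2λ Σ_{j=k+1}^t η_j) (2e Σ_{j=k+1}^t η_j)^{γ−1}, where Π_{k+1}^t(A) = ∏_{j=k+1}^t (I − η_j A). -/
/-- Lemma 5.2 (spectral form): let `σ_i ∈ [0, κ²]` be the eigenvalues of a positive compact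
self-adjoint trace-class operator `L` with effective dimension bound
`tr(L(L+λ)⁻¹) = Σ_i σ_i/(σ_i+λ) ≤ c_γ λ^{−γ}` for all `λ > 0`.  For `λ ≥ 0` and step-sizes
`η_j > 0` with `η_j(λ+κ²) ≤ 1`, and any `k ≤ t−1` (`t ≥ 1`),
`tr(Π_{k+1}^t(L+λI)² L) = Σ_i σ_i ∏_{j=k+1}^t (1−η_j(λ+σ_i))²
  ≤ 2 c_γ exp(−2λ Σ_{j=k+1}^t η_j) (2e Σ_{j=k+1}^t η_j)^{γ−1}`. -/
theorem stmt_15 (σ : ℕ → ℝ) (κ cγ γ l : ℝ) (η : ℕ → ℝ)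
    (hκ : 1 ≤ κ) (hσ0 : ∀ i, 0 ≤ σ i) (hσκ : ∀ i, σ i ≤ κ ^ 2)
    (hsum : Summable σ)
    (heff : ∀ lam : ℝ, 0 < lam → (∑' i, σ i / (σ i + lam)) ≤ cγ * lam ^ (-γ))
    (hγ0 : 0 ≤ γ) (hγ1 : γ ≤ 1) (hcγ : 0 < cγ) (hl : 0 ≤ l)
    (hη : ∀ j, 0 < η j) (hηl : ∀ j, η j * (l + κ ^ 2) ≤ 1)
    (k t : ℕ) (ht : 1 ≤ t) (hkt : k ≤ t - 1) :
    (∑' i, σ i * (∏ j ∈ Finset.Icc (k + 1) t, (1 - η j * (l + σ i))) ^ 2) ≤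
      2 * cγ * Real.exp (-(2 * l * ∑ j ∈ Finset.Icc (k + 1) t, η j)) *
        (2 * Real.exp 1 * ∑ j ∈ Finset.Icc (k + 1) t, η j) ^ (γ - 1) := by
  set S := ∑ j ∈ Finset.Icc (k + 1) t, η j with hS
  have hkt' : k + 1 ≤ t := by omega
  have hSpos : 0 < S :=
    Finset.sum_pos (fun j _ => hη j) ⟨t, Finset.mem_Icc.mpr ⟨hkt', le_refl t⟩⟩
  have hepos : (0:ℝ) < Real.exp 1 := Real.exp_pos 1
  set lam := 1 / (2 * Real.exp 1 * S) with hlam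
  have hlampos : 0 < lam := by rw [hlam]; positivity
  -- x e^{-2xS} ≤ lam for x ≥ 0
  have hxexp : ∀ x : ℝ, 0 ≤ x → x * Real.exp (-(2 * x * S)) ≤ lam := by
    intro x hx
    have h1 : 2 * x * S ≤ Real.exp (2 * x * S - 1) := by
      have := Real.add_one_le_exp (2 * x * S - 1); linarith
    have h2 : 2 * x * S * Real.exp (-(2 * x * S)) ≤ Real.exp (-1 : ℝ) := by
      calc 2 * x * S * Real.exp (-(2 * x * S))
          ≤ Real.exp (2 * x * S - 1) * Real.exp (-(2 * x * S)) :=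
            mul_le_mul_of_nonneg_right h1 (Real.exp_nonneg _)
        _ = Real.exp (-1 : ℝ) := by rw [← Real.exp_add]; ring_nf
    have heq : Real.exp (-1 : ℝ) / (2 * S) = lam := by
      rw [hlam, Real.exp_neg]
      field_simp
    rw [← heq, le_div_iff₀ (by positivity)]
    nlinarith [h2]
  -- nonnegativity and bounds for the product factors
  have hfac0 : ∀ i, ∀ j ∈ Finset.Icc (k + 1) t, 0 ≤ 1 - η j * (l + σ i) := by
    intro i j _
    have h1 := hηl j
    have h2 := (hη j).le
    have h3 := hσκ i
    have h4 := hσ0 i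
    nlinarith
  have hP0 : ∀ i, 0 ≤ ∏ j ∈ Finset.Icc (k + 1) t, (1 - η j * (l + σ i)) := fun i =>
    Finset.prod_nonneg (hfac0 i)
  have hP1 : ∀ i, ∏ j ∈ Finset.Icc (k + 1) t, (1 - η j * (l + σ i)) ≤ 1 := by
    intro i
    apply Finset.prod_le_one (hfac0 i)
    intro j _
    have h2 := (hη j).le
    have h4 := hσ0 i
    nlinarith
  have hPle : ∀ i, ∏ j ∈ Finset.Icc (k + 1) t, (1 - η j * (l + σ i)) ≤
      Real.exp (-((l + σ i) * S)) := by
    intro i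
    calc ∏ j ∈ Finset.Icc (k + 1) t, (1 - η j * (l + σ i))
        ≤ ∏ j ∈ Finset.Icc (k + 1) t, Real.exp (-(η j * (l + σ i))) := by
          apply Finset.prod_le_prod (hfac0 i)
          intro j _
          have := Real.add_one_le_exp (-(η j * (l + σ i)))
          linarith
      _ = Real.exp (∑ j ∈ Finset.Icc (k + 1) t, -(η j * (l + σ i))) :=
          (Real.exp_sum _ _).symm
      _ = Real.exp (-((l + σ i) * S)) := by
          congr 1
          rw [hS, Finset.mul_sum, ← Finset.sum_neg_distrib]
          apply Finset.sum_congr rfl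
          intro j _
          ring
  -- the key pointwise bound
  have key : ∀ i, σ i * (∏ j ∈ Finset.Icc (k + 1) t, (1 - η j * (l + σ i))) ^ 2 ≤
      (Real.exp (-(2 * l * S)) * (2 * lam)) * (σ i / (σ i + lam)) := by
    intro i
    have hσi := hσ0 i
    have hsq : (∏ j ∈ Finset.Icc (k + 1) t, (1 - η j * (l + σ i))) ^ 2 ≤
        Real.exp (-((l + σ i) * S)) ^ 2 :=
      pow_le_pow_left₀ (hP0 i) (hPle i) 2
    have hexpsq : Real.exp (-((l + σ i) * S)) ^ 2 =
        Real.exp (-(2 * l * S)) * Real.exp (-(2 * σ i * S)) := by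
      rw [sq, ← Real.exp_add, ← Real.exp_add]
      ring_nf
    have hposd : 0 < σ i + lam := by positivity
    -- (σ i + lam) e^{-2σS} ≤ 2 lam
    have hA : (σ i + lam) * Real.exp (-(2 * σ i * S)) ≤ 2 * lam := by
      have h1 := hxexp (σ i) hσi
      have h2 : Real.exp (-(2 * σ i * S)) ≤ 1 := by
        apply Real.exp_le_one_iff.mpr
        nlinarith
      nlinarith [Real.exp_nonneg (-(2 * σ i * S))]
    have hB : σ i * Real.exp (-(2 * σ i * S)) ≤ σ i / (σ i + lam) * (2 * lam) := by
      rw [div_mul_eq_mul_div, le_div_iff₀ hposd]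
      nlinarith [mul_le_mul_of_nonneg_left hA hσi, Real.exp_nonneg (-(2 * σ i * S))]
    calc σ i * (∏ j ∈ Finset.Icc (k + 1) t, (1 - η j * (l + σ i))) ^ 2
        ≤ σ i * (Real.exp (-(2 * l * S)) * Real.exp (-(2 * σ i * S))) := by
          rw [← hexpsq]; exact mul_le_mul_of_nonneg_left hsq hσi
      _ = Real.exp (-(2 * l * S)) * (σ i * Real.exp (-(2 * σ i * S))) := by ring
      _ ≤ Real.exp (-(2 * l * S)) * (σ i / (σ i + lam) * (2 * lam)) :=
          mul_le_mul_of_nonneg_left hB (Real.exp_nonneg _)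
      _ = (Real.exp (-(2 * l * S)) * (2 * lam)) * (σ i / (σ i + lam)) := by ring
  -- summability
  have hsum2 : Summable (fun i => σ i / (σ i + lam)) := by
    apply Summable.of_nonneg_of_le (fun i => by have := hσ0 i; positivity)
      (fun i => ?_) (hsum.div_const lam)
    have := hσ0 i
    gcongr
    · linarith
  have hsumL : Summable (fun i =>
      σ i * (∏ j ∈ Finset.Icc (k + 1) t, (1 - η j * (l + σ i))) ^ 2) := by
    apply Summable.of_nonneg_of_le (fun i => ?_) (fun i => ?_) hsum
    · have := hP0 i; have := hσ0 i; positivity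
    · have hPsq : (∏ j ∈ Finset.Icc (k + 1) t, (1 - η j * (l + σ i))) ^ 2 ≤ 1 :=
        pow_le_one₀ (hP0 i) (hP1 i)
      nlinarith [hσ0 i]
  have h2eS : (0:ℝ) < 2 * Real.exp 1 * S := by positivity
  have hlamrpow : lam ^ (-γ) = (2 * Real.exp 1 * S) ^ γ := by
    rw [hlam, one_div, Real.inv_rpow h2eS.le, ← Real.rpow_neg h2eS.le, neg_neg]
  calc (∑' i, σ i * (∏ j ∈ Finset.Icc (k + 1) t, (1 - η j * (l + σ i))) ^ 2)
      ≤ ∑' i, (Real.exp (-(2 * l * S)) * (2 * lam)) * (σ i / (σ i + lam)) :=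
        Summable.tsum_le_tsum key hsumL (hsum2.mul_left _)
    _ = (Real.exp (-(2 * l * S)) * (2 * lam)) * ∑' i, σ i / (σ i + lam) := tsum_mul_left
    _ ≤ (Real.exp (-(2 * l * S)) * (2 * lam)) * (cγ * lam ^ (-γ)) := by
        apply mul_le_mul_of_nonneg_left (heff lam hlampos) (by positivity)
    _ = 2 * cγ * Real.exp (-(2 * l * S)) * (2 * Real.exp 1 * S) ^ (γ - 1) := by
        rw [hlamrpow, Real.rpow_sub h2eS, Real.rpow_one, hlam]
        field_simp
end

section
/- Let a sequence of nonnegative reals (r_t) satisfy r_{t+1} ≤ s_t + (sup_{1 ≤ k ≤ t} r_k + E) · b_t for all t ∈ [T], where r_1 ≤ B², s_t ≤ 4B² for all t, and b_t ≤ 1/2 for all t ∈ [T], with E ≥ 0 fixed. Then for all t ∈ [T]: r_{t+1} ≤ s_t + (8B² + 2E) b_t. -/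
/-- Abstract induction lemma (Proposition 4): if nonnegative reals `(r_t)` satisfy
`r_{t+1} ≤ s_t + (sup_{1≤k≤t} r_k + E) b_t` for all `t ∈ [T]`, with `r_1 ≤ B²`,
`s_t ≤ 4B²`, `b_t ≤ 1/2` on `[T]` and `E ≥ 0`, then
`r_{t+1} ≤ s_t + (8B² + 2E) b_t` for all `t ∈ [T]`. -/
theorem stmt_16 (r s b : ℕ → ℝ) (B E : ℝ) (T : ℕ)
    (hr : ∀ t, 0 ≤ r t) (hE : 0 ≤ E)
    (hr1 : r 1 ≤ B ^ 2) (hs : ∀ t, s t ≤ 4 * B ^ 2)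
    (hb0 : ∀ t, 0 ≤ b t) (hb : ∀ t, 1 ≤ t → t ≤ T → b t ≤ 1 / 2)
    (hrec : ∀ t, ∀ h1 : 1 ≤ t, t ≤ T →
      r (t + 1) ≤ s t + ((Finset.Icc 1 t).sup' (Finset.nonempty_Icc.2 h1) r + E) * b t) :
    ∀ t, 1 ≤ t → t ≤ T → r (t + 1) ≤ s t + (8 * B ^ 2 + 2 * E) * b t := by
  have key : ∀ k, 1 ≤ k → k ≤ T + 1 → r k ≤ 8 * B ^ 2 + E := by
    intro k
    induction k using Nat.strong_induction_on with
    | _ k ih =>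
      intro hk1 hkT
      match k, hk1 with
      | 1, _ => nlinarith [sq_nonneg B]
      | (t+2), _ =>
        have h1 : 1 ≤ t + 1 := Nat.le_add_left 1 t
        have h2 : t + 1 ≤ T := by omega
        have hrec' := hrec (t+1) h1 h2
        have hsup : (Finset.Icc 1 (t+1)).sup' (Finset.nonempty_Icc.2 h1) r
            ≤ 8 * B ^ 2 + E := by
          apply Finset.sup'_le
          intro j hj
          simp only [Finset.mem_Icc] at hj
          exact ih j (by omega) hj.1 (by omega)
        have hb' := hb (t+1) h1 h2
        have hb0' := hb0 (t+1)
        have hs' := hs (t+1)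
        have hmul : ((Finset.Icc 1 (t+1)).sup' (Finset.nonempty_Icc.2 h1) r + E) * b (t+1)
            ≤ (8 * B ^ 2 + 2 * E) * (1/2) := by
          apply mul_le_mul (by linarith) hb' hb0'
          nlinarith [sq_nonneg B]
        calc r (t+2) ≤ s (t+1) + _ * b (t+1) := hrec'
          _ ≤ 4 * B ^ 2 + (8 * B ^ 2 + 2 * E) * (1/2) := by linarith
          _ = 8 * B ^ 2 + E := by ring
  intro t ht1 htT
  have hrec' := hrec t ht1 htT
  have hsup : (Finset.Icc 1 t).sup' (Finset.nonempty_Icc.2 ht1) r ≤ 8 * B ^ 2 + E := by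
    apply Finset.sup'_le
    intro j hj
    simp only [Finset.mem_Icc] at hj
    exact key j hj.1 (by omega)
  have := mul_le_mul_of_nonneg_right (show (Finset.Icc 1 t).sup' (Finset.nonempty_Icc.2 ht1) r + E
    ≤ 8 * B ^ 2 + 2 * E by linarith) (hb0 t)
  linarith
end
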